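/- For every imaginary octonion p, one has [ad_{X_1}, ad_{X_p}] = 2·ad_{D_p} as ℝ-linear operators on V, where X_1 is X_q with q = 1. -/

import Mathlib

noncomputable section

abbrev H := Quaternion ℝ

/-- The octonions 𝕆, as the Cayley–Dickson double of the quaternions:
pairs (a,b) of quaternions. -/
def Oct : Type := H × H

namespace Oct

instance : AddCommGroup Oct := inferInstanceAs (AddCommGroup (H × H))
instance : Module ℝ Oct := inferInstanceAs (Module ℝ (H × H))

def mk' (a b : H) : Oct := (a, b)
def fst : Oct → H := Prod.fst
def snd : Oct → H := Prod.snd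

/-- Cayley–Dickson multiplication: (a,b)·(c,d) = (ac − conj(d)b, da + b·conj(c)). -/
instance : Mul Oct :=
  ⟨fun p q => mk' (p.fst * q.fst - star q.snd * p.snd) (q.snd * p.fst + p.snd * star q.fst)⟩

instance : One Oct := ⟨mk' 1 0⟩

/-- Octonionic conjugation: conj (a,b) = (conj a, −b). -/
def conj (p : Oct) : Oct := mk' (star p.fst) (-p.snd)

/-- The real part of an octonion, as a real scalar. -/
def re (p : Oct) : ℝ := (p.fst).re

/-- The bilinear form ⟨x,y⟩ = (x·conj(y) + y·conj(x))/2, a real scalar. -/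
def oinner (p q : Oct) : ℝ := re (p * conj q + q * conj p) / 2

/-- The norm N(x) = x·conj(x), a real scalar. -/
def N (p : Oct) : ℝ := re (p * conj p)

/-- An octonion is imaginary if conj x = −x. -/
def IsIm (p : Oct) : Prop := conj p = -p

/-- The embedding of the reals into the octonions. -/
def oR (r : ℝ) : Oct := mk' (algebraMap ℝ H r) 0

end Oct

open Oct

abbrev M2 := Matrix (Fin 2) (Fin 2) Oct

/-- The traceless Hermitian 2×2 matrix P(z,a) = !![z, a; conj a, −z]. -/
def Pm (z : ℝ) (a : Oct) : M2 := !![oR z, a; conj a, -oR z]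

/-- The off-diagonal anti-Hermitian generator X_q = !![0, q; −conj q, 0]. -/
def Xm (q : Oct) : M2 := !![0, q; -conj q, 0]

/-- The diagonal generator D_q = !![q, 0; 0, −q]. -/
def Dm (q : Oct) : M2 := !![q, 0; 0, -q]

/-- The adjoint action ad_A : P ↦ AP − PA (entrywise octonion multiplication). -/
def ad (A : M2) : M2 → M2 := fun P => A * P - P * A

/-- The bracket of operators, [S,T] = S∘T − T∘S. -/
def br (S T : M2 → M2) : M2 → M2 := fun P => S (T P) - T (S P)

/-!
Both `x conj(y) + y conj(x)` and `conj(x) y + conj(y) x` equal the real number `2⟨x,y⟩`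
(both are self-conjugate, and `Re(xy) = Re(yx)`), so `ad_{X_q} P(z,a) = P(2⟨q,a⟩, -2z q)`.
Applying this twice, the diagonal parts of `[ad_{X_1}, ad_{X_p}] P(z,a)` cancel by symmetry of
`⟨,⟩`, leaving `P(0, 4(Re(a) p - ⟨p,a⟩))`. For imaginary `p`, `ad_{D_p} P(z,a) = P(0, pa + ap)`,
and substituting `conj(a) = 2 Re(a) - a` into `p conj(a) + a conj(p) = 2⟨p,a⟩` gives
`pa + ap = 2 Re(a) p - 2⟨p,a⟩`.
-/

namespace Oct

@[ext] theorem ext {x y : Oct} (h₁ : x.fst = y.fst) (h₂ : x.snd = y.snd) : x = y :=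
  Prod.ext h₁ h₂

section Components

variable (x y : Oct) (r : ℝ)

@[simp] theorem fst_zero : (0 : Oct).fst = 0 := rfl
@[simp] theorem snd_zero : (0 : Oct).snd = 0 := rfl
@[simp] theorem fst_one : (1 : Oct).fst = 1 := rfl
@[simp] theorem snd_one : (1 : Oct).snd = 0 := rfl
@[simp] theorem fst_add : (x + y).fst = x.fst + y.fst := rfl
@[simp] theorem snd_add : (x + y).snd = x.snd + y.snd := rfl
@[simp] theorem fst_neg : (-x).fst = -x.fst := rfl
@[simp] theorem snd_neg : (-x).snd = -x.snd := rfl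
@[simp] theorem fst_sub : (x - y).fst = x.fst - y.fst := rfl
@[simp] theorem snd_sub : (x - y).snd = x.snd - y.snd := rfl
@[simp] theorem fst_smul : (r • x).fst = r • x.fst := rfl
@[simp] theorem snd_smul : (r • x).snd = r • x.snd := rfl
@[simp] theorem fst_mul : (x * y).fst = x.fst * y.fst - star y.snd * x.snd := rfl
@[simp] theorem snd_mul : (x * y).snd = y.snd * x.fst + x.snd * star y.fst := rfl
@[simp] theorem fst_conj : (conj x).fst = star x.fst := rfl
@[simp] theorem snd_conj : (conj x).snd = -x.snd := rfl
@[simp] theorem fst_oR : (oR r).fst = r := rfl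
@[simp] theorem snd_oR : (oR r).snd = 0 := rfl
@[simp] theorem re_eq : re x = x.fst.re := rfl

end Components

end Oct

-- Only a local instance: globally it would change how `ℝ`-scalar multiplication on `M2` elaborates.
abbrev Oct.nonAssocRing : NonAssocRing Oct :=
  { (inferInstance : AddCommGroup Oct) with
    mul := (· * ·)
    one := 1
    left_distrib := fun x y z => by ext <;> simp [mul_add, add_mul] <;> abel
    right_distrib := fun x y z => by ext <;> simp [mul_add, add_mul] <;> abel
    zero_mul := fun x => by ext <;> simp
    mul_zero := fun x => by ext <;> simp
    one_mul := fun x => by ext <;> simp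
    mul_one := fun x => by ext <;> simp }

section

attribute [local instance] Oct.nonAssocRing

namespace Oct

instance : IsScalarTower ℝ Oct Oct :=
  ⟨fun r x y => by ext <;> simp [smul_sub, smul_add]⟩

instance : SMulCommClass ℝ Oct Oct :=
  ⟨fun r x y => by ext <;> simp [smul_sub, smul_add]⟩

@[simp] theorem conj_conj (x : Oct) : conj (conj x) = x := by ext <;> simp

@[simp] theorem conj_add (x y : Oct) : conj (x + y) = conj x + conj y := by
  ext <;> simp [add_comm]

@[simp] theorem conj_neg (x : Oct) : conj (-x) = -conj x := by ext <;> simp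

@[simp] theorem conj_sub (x y : Oct) : conj (x - y) = conj x - conj y := by
  ext <;> simp [sub_eq_add_neg]

@[simp] theorem conj_smul (r : ℝ) (x : Oct) : conj (r • x) = r • conj x := by ext <;> simp

theorem conj_mul (x y : Oct) : conj (x * y) = conj y * conj x := by
  ext <;> simp [star_sub, add_comm]

theorem oR_eq_smul_one (r : ℝ) : oR r = r • (1 : Oct) := by
  ext : 1
  · exact Algebra.algebraMap_eq_smul_one r
  · simp

@[simp] theorem oR_zero : oR 0 = 0 := by ext <;> simp

@[simp] theorem oR_sub (r s : ℝ) : oR (r - s) = oR r - oR s := by ext <;> simp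

@[simp] theorem smul_oR (r s : ℝ) : r • oR s = oR (r * s) := by ext <;> simp

theorem mul_oR (x : Oct) (r : ℝ) : x * oR r = r • x := by
  ext <;> simp [mul_comm]

theorem oR_mul (r : ℝ) (x : Oct) : oR r * x = r • x := by
  ext <;> simp [mul_comm]

theorem eq_oR_re_of_conj_eq {x : Oct} (hx : conj x = x) : x = oR (re x) := by
  have h₁ : star x.fst = x.fst := congrArg fst hx
  have h₂ : -x.snd = x.snd := congrArg snd hx
  ext : 1
  · exact Quaternion.star_eq_self.mp h₁
  · rw [neg_eq_iff_eq_neg, eq_neg_iff_add_eq_zero, ← two_smul ℝ, smul_eq_zero] at h₂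
    exact h₂.resolve_left two_ne_zero

theorem re_add (x y : Oct) : re (x + y) = re x + re y := by simp

theorem re_smul (r : ℝ) (x : Oct) : re (r • x) = r * re x := by simp

theorem re_mul_comm (x y : Oct) : re (x * y) = re (y * x) := by
  simp only [re_eq, fst_mul, Quaternion.re_sub, Quaternion.re_mul, Quaternion.re_star,
    Quaternion.imI_star, Quaternion.imJ_star, Quaternion.imK_star]
  ring

theorem oinner_comm (x y : Oct) : oinner x y = oinner y x := by
  rw [oinner, oinner, add_comm]

theorem oinner_smul_right (x y : Oct) (r : ℝ) : oinner x (r • y) = r * oinner x y := by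
  rw [oinner, oinner, conj_smul, mul_smul_comm, smul_mul_assoc, ← smul_add, re_smul]
  ring

theorem oinner_one_left (x : Oct) : oinner 1 x = re x := by
  simp [oinner]

theorem two_mul_oinner (x y : Oct) : 2 * oinner x y = re (x * conj y + y * conj x) := by
  rw [oinner, mul_div_cancel₀ _ two_ne_zero]

theorem mul_conj_add_mul_conj (x y : Oct) : x * conj y + y * conj x = oR (2 * oinner x y) := by
  have h : conj (x * conj y + y * conj x) = x * conj y + y * conj x := by
    rw [conj_add, conj_mul, conj_mul, conj_conj, conj_conj, add_comm]
  rw [eq_oR_re_of_conj_eq h, two_mul_oinner]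

theorem conj_mul_add_conj_mul (x y : Oct) : conj x * y + conj y * x = oR (2 * oinner x y) := by
  have h : conj (conj x * y + conj y * x) = conj x * y + conj y * x := by
    rw [conj_add, conj_mul, conj_mul, conj_conj, conj_conj, add_comm]
  rw [eq_oR_re_of_conj_eq h, two_mul_oinner, re_add, re_add, re_mul_comm (conj x),
    re_mul_comm (conj y), add_comm]

theorem self_add_conj (x : Oct) : x + conj x = oR (2 * re x) := by
  ext : 1
  · simpa using Quaternion.self_add_star' x.fst
  · simp

theorem IsIm.mul_add_mul {p : Oct} (hp : IsIm p) (a : Oct) :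
    p * a + a * p = (2 * re a) • p - oR (2 * oinner p a) := by
  have h := mul_conj_add_mul_conj p a
  rw [hp, mul_neg, ← sub_eq_of_eq_add' (self_add_conj a).symm, mul_sub, mul_oR] at h
  rw [← h]
  abel

end Oct

theorem Pm_sub (z w : ℝ) (a b : Oct) : Pm z a - Pm w b = Pm (z - w) (a - b) := by
  refine Matrix.ext fun i j => ?_
  fin_cases i <;> fin_cases j <;> simp [Pm, neg_add_eq_sub]

theorem smul_Pm (r z : ℝ) (a : Oct) : r • Pm z a = Pm (r * z) (r • a) := by
  refine Matrix.ext fun i j => ?_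
  fin_cases i <;> fin_cases j <;> simp [Pm]

theorem ad_Xm_Pm (q : Oct) (z : ℝ) (a : Oct) :
    ad (Xm q) (Pm z a) = Pm (2 * oinner q a) ((-(2 * z)) • q) := by
  refine Matrix.ext fun i j => ?_
  fin_cases i <;> fin_cases j <;>
    simp [ad, Xm, Pm, mul_oR, oR_mul, mul_conj_add_mul_conj, ← neg_add',
      conj_mul_add_conj_mul] <;>
    module

theorem Oct.IsIm.ad_Dm_Pm {p : Oct} (hp : IsIm p) (z : ℝ) (a : Oct) :
    ad (Dm p) (Pm z a) = Pm 0 (p * a + a * p) := by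
  refine Matrix.ext fun i j => ?_
  fin_cases i <;> fin_cases j <;>
    simp [ad, Dm, Pm, mul_oR, oR_mul, conj_mul, show conj p = -p from hp]
  abel

end

/-- For every imaginary octonion p, one has [ad_{X_1}, ad_{X_p}] = 2·ad_{D_p}
as ℝ-linear operators on V (i.e. on every P(z,a)), where X_1 is X_q with q = 1. -/
theorem bracket_X1_Xp (p : Oct) (hp : IsIm p) :
    ∀ (z : ℝ) (a : Oct),
      br (ad (Xm 1)) (ad (Xm p)) (Pm z a) = (2 : ℝ) • ad (Dm p) (Pm z a) := by
  intro z a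
  calc br (ad (Xm 1)) (ad (Xm p)) (Pm z a)
      = Pm (2 * oinner 1 ((-(2 * z)) • p)) ((-(2 * (2 * oinner p a))) • 1)
        - Pm (2 * oinner p ((-(2 * z)) • 1)) ((-(2 * (2 * oinner 1 a))) • p) := by
        simp only [br, ad_Xm_Pm]
    _ = (2 : ℝ) • Pm 0 ((2 * re a) • p - oR (2 * oinner p a)) := by
        rw [smul_Pm, Pm_sub, oinner_smul_right, oinner_smul_right, oinner_comm p,
          oinner_one_left a, oR_eq_smul_one]
        congr 1
        · ring
        · module
    _ = (2 : ℝ) • ad (Dm p) (Pm z a) := by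
        rw [hp.ad_Dm_Pm, hp.mul_add_mul]
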